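/- arXiv:1410.3274 — 3 statements merged into one kernel-verified Lean document; each statement's English description precedes it below -/
import Mathlib

section
/- Let p be a prime, q = p^{2r+1} an odd power of p, and let s ∈ 𝔽_q^×. Then the set {k ∈ 𝔽_q : s^p·k^{p²} = s·k} has exactly p elements. -/
/-!
Since `s⁻¹` is fixed by the Frobenius power `x ↦ x ^ p ^ (2r+1)`, the element
`c = s⁻¹ ^ (1 + p² + p⁴ + ⋯ + p^(2r))` satisfies `s^p c^(p²) = s c`. Substituting `k = c t` turns
the equation into `t^(p²) = t`, and because `2` and `2r+1` are coprime this forces `t^p = t`,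
i.e. `t` lies in the prime field. Hence the solution set is the line `c • 𝔽_p`.
-/

open Finset

lemma pow_pow_sq_eq_self_iff_pow_eq_self {M : Type*} [Monoid M] {p r : ℕ} {t : M}
    (ht : t ^ p ^ (2 * r + 1) = t) : t ^ p ^ 2 = t ↔ t ^ p = t := by
  refine ⟨fun h ↦ ?_, fun h ↦ by rw [sq, pow_mul, h, h]⟩
  have fixed_even : ∀ j, t ^ p ^ (2 * j) = t := by
    intro j
    induction j with
    | zero => simp
    | succ j ih => rw [mul_add, mul_one, pow_add, pow_mul, ih, h]
  calc t ^ p = (t ^ p ^ (2 * r + 1)) ^ p := by rw [ht]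
    _ = t ^ p ^ (2 * (r + 1)) := by rw [← pow_mul, ← pow_succ]; ring_nf
    _ = t := fixed_even (r + 1)

lemma pow_geom_sum_pow_sq_mul {M : Type*} [CommMonoid M] {p r : ℕ} {u : M}
    (hu : u ^ p ^ (2 * r + 1) = u) :
    (u ^ ∑ j ∈ range (r + 1), (p ^ 2) ^ j) ^ p ^ 2 * u =
      (u ^ ∑ j ∈ range (r + 1), (p ^ 2) ^ j) * u ^ p := by
  have exponent : p ^ 2 * ∑ j ∈ range (r + 1), (p ^ 2) ^ j + 1 =
      (p ^ 2) ^ (r + 1) + ∑ j ∈ range (r + 1), (p ^ 2) ^ j :=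
    geom_sum_succ.symm.trans geom_sum_succ'
  have top : u ^ (p ^ 2) ^ (r + 1) = u ^ p := by
    rw [← pow_mul, mul_add_one, pow_succ, pow_mul, hu]
  rw [← pow_mul, ← pow_succ, mul_comm _ (p ^ 2), exponent, pow_add, top, mul_comm]

lemma exists_ne_zero_pow_mul_pow_sq_eq {F : Type*} [Field F] {p r : ℕ} {s : F} (hs : s ≠ 0)
    (hfix : s ^ p ^ (2 * r + 1) = s) : ∃ c ≠ 0, s ^ p * c ^ p ^ 2 = s * c := by
  set c := s⁻¹ ^ ∑ j ∈ range (r + 1), (p ^ 2) ^ j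
  have hc := pow_geom_sum_pow_sq_mul (u := s⁻¹) (by rw [inv_pow, hfix])
  refine ⟨c, pow_ne_zero _ (inv_ne_zero hs), ?_⟩
  calc s ^ p * c ^ p ^ 2 = s ^ p * s * (c ^ p ^ 2 * s⁻¹) := by field_simp
    _ = s ^ p * s * (c * s⁻¹ ^ p) := by rw [hc]
    _ = s * c := by rw [inv_pow]; field_simp

lemma pow_mul_mul_pow_sq_eq_iff {M₀ : Type*} [CommMonoidWithZero M₀] [IsLeftCancelMulZero M₀]
    {p : ℕ} {s c : M₀}
    (hsc : s * c ≠ 0) (hc : s ^ p * c ^ p ^ 2 = s * c) (t : M₀) :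
    s ^ p * (c * t) ^ p ^ 2 = s * (c * t) ↔ t ^ p ^ 2 = t := by
  rw [mul_pow, ← mul_assoc, hc, ← mul_assoc]
  exact mul_right_inj' hsc

lemma card_pow_char_eq_self (F : Type*) [Field F] (p : ℕ) [Fact p.Prime] [CharP F p] :
    Nat.card {t : F // t ^ p = t} = p := by
  refine (Nat.card_congr (Equiv.subtypeEquivRight fun t ↦ ?_)).trans (Subfield.card_bot F p)
  exact (Subfield.mem_bot_iff_pow_eq_self F p).symm

/-- for `q = p^(2r+1)` an odd power of a prime `p` and `s ∈ 𝔽_q^×`, the set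
`{k ∈ 𝔽_q : s^p·k^(p²) = s·k}` has exactly `p` elements. -/
theorem stmt_10 (p r : ℕ) (hp : p.Prime) (F : Type*) [Field F] [Fintype F] [CharP F p]
    (hcard : Fintype.card F = p ^ (2 * r + 1)) (s : F) (hs : s ≠ 0) :
    Nat.card {k : F // s ^ p * k ^ (p ^ 2) = s * k} = p := by
  have := Fact.mk hp
  have frob_odd (x : F) : x ^ p ^ (2 * r + 1) = x := hcard ▸ FiniteField.pow_card x
  obtain ⟨c, hc0, hc⟩ := exists_ne_zero_pow_mul_pow_sq_eq hs (frob_odd s)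
  calc Nat.card {k : F // s ^ p * k ^ (p ^ 2) = s * k}
      = Nat.card {t : F // t ^ p ^ 2 = t} :=
        Nat.card_congr ((Equiv.mulLeft₀ c hc0).subtypeEquiv
          fun t ↦ (pow_mul_mul_pow_sq_eq_iff (mul_ne_zero hs hc0) hc t).symm).symm
    _ = Nat.card {t : F // t ^ p = t} :=
        Nat.card_congr <|
          Equiv.subtypeEquivRight fun t ↦ pow_pow_sq_eq_self_iff_pow_eq_self (frob_odd t)
    _ = p := card_pow_char_eq_self F p
end

section
/- Let p be a prime, q = p^{2r} an even power of p with r ≥ 1, and let s ∈ 𝔽_q^×. Then the set {k ∈ 𝔽_q : s^p·k^{p²} = s·k} has exactly p² elements if s^{(q-1)/(p+1)} = 1, and exactly 1 element otherwise. -/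
open Polynomial Finset

-- helper 1: count of e-th roots of a nonzero a
lemma count_roots_aux (F : Type*) [Field F] [Fintype F] [DecidableEq F] {e : ℕ} (he : e ≠ 0)
    (hdvd : e ∣ Fintype.card F - 1) (a : F) (ha : a ≠ 0) :
    (Finset.univ.filter (fun x : F => x ^ e = a)).card
      = if ∃ α : F, α ^ e = a then e else 0 := by
  obtain ⟨g, hg⟩ := IsCyclic.exists_generator (α := Fˣ)
  have hord : orderOf g = Fintype.card F - 1 := by
    rw [orderOf_eq_card_of_forall_mem_zpowers hg, Nat.card_eq_fintype_card,
      Fintype.card_units]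
  have hm : 0 < Fintype.card F - 1 := by
    have := Fintype.one_lt_card (α := F)
    omega
  have hprim : IsPrimitiveRoot (g : F) (Fintype.card F - 1) := by
    rw [IsPrimitiveRoot.coe_units_iff, ← hord]
    exact IsPrimitiveRoot.orderOf g
  have hζ : IsPrimitiveRoot ((g : F) ^ ((Fintype.card F - 1) / e)) e :=
    hprim.pow hm ((Nat.div_mul_cancel hdvd).symm)
  have hfil : Finset.univ.filter (fun x : F => x ^ e = a) = (nthRoots e a).toFinset := by
    ext x
    simp [Multiset.mem_toFinset, mem_nthRoots (Nat.pos_of_ne_zero he)]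
  rw [hfil, Multiset.toFinset_card_of_nodup (hζ.nthRoots_nodup ha), hζ.card_nthRoots a]
  simp

-- helper 2: solvability criterion
lemma exists_pow_iff_aux (F : Type*) [Field F] [Fintype F] [DecidableEq F] {e : ℕ} (he : e ≠ 0)
    (hdvd : e ∣ Fintype.card F - 1) (a : F) (ha : a ≠ 0) :
    (∃ α : F, α ^ e = a) ↔ a ^ ((Fintype.card F - 1) / e) = 1 := by
  set m := Fintype.card F - 1 with hm
  have hm0 : 0 < m := by have := Fintype.one_lt_card (α := F); omega
  set f := m / e with hf
  have hef : e * f = m := Nat.mul_div_cancel' hdvd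
  have hf0 : f ≠ 0 := by
    intro h
    rw [h, mul_zero] at hef
    omega
  constructor
  · rintro ⟨α, rfl⟩
    have hα : α ≠ 0 := by
      intro h; apply ha; rw [h, zero_pow he]
    rw [← pow_mul, hef, FiniteField.pow_card_sub_one_eq_one α hα]
  · intro hcrit
    -- counting argument
    have hfib : ∀ b : F, (((Finset.univ.filter (fun x : F => x ^ m = 1)).filter
        (fun x => x ^ e = b)).card : ℕ) ≤ e := by
      intro b
      calc ((Finset.univ.filter (fun x : F => x ^ m = 1)).filter (fun x => x ^ e = b)).card
          ≤ (nthRoots e b).toFinset.card := by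
            apply Finset.card_le_card
            intro x hx
            simp only [Finset.mem_filter] at hx
            simp [Multiset.mem_toFinset, mem_nthRoots (Nat.pos_of_ne_zero he), hx.2]
        _ ≤ Multiset.card (nthRoots e b) := Multiset.toFinset_card_le _
        _ ≤ e := Polynomial.card_nthRoots e b
    have hSm : (Finset.univ.filter (fun x : F => x ^ m = 1)).card = m := by
      rw [count_roots_aux F (by omega) dvd_rfl 1 one_ne_zero, if_pos ⟨1, one_pow m⟩]
    have hSf : (Finset.univ.filter (fun x : F => x ^ f = 1)).card = f := by
      rw [count_roots_aux F hf0 ⟨e, by rw [show Fintype.card F - 1 = m from rfl, ← hef, mul_comm]⟩ 1 one_ne_zero, if_pos ⟨1, one_pow f⟩]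
    set S := Finset.univ.filter (fun x : F => x ^ m = 1) with hS
    have hsub : S.image (fun x => x ^ e) ⊆ Finset.univ.filter (fun x : F => x ^ f = 1) := by
      intro b hb
      simp only [Finset.mem_image, hS, Finset.mem_filter, Finset.mem_univ, true_and] at hb ⊢
      obtain ⟨x, hx, rfl⟩ := hb
      rw [← pow_mul, hef, hx]
    have hcount : m ≤ e * (S.image (fun x => x ^ e)).card :=
      hSm ▸ Finset.card_le_mul_card_image S e (fun b _ => hfib b)
    have himeq : S.image (fun x => x ^ e) = Finset.univ.filter (fun x : F => x ^ f = 1) := by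
      apply Finset.eq_of_subset_of_card_le hsub
      rw [hSf]
      by_contra hlt
      push_neg at hlt
      have : e * (S.image (fun x => x ^ e)).card < e * f :=
        (Nat.mul_lt_mul_left (Nat.pos_of_ne_zero he)).mpr hlt
      omega
    have ha' : a ∈ Finset.univ.filter (fun x : F => x ^ f = 1) := by
      simp [hcrit]
    rw [← himeq] at ha'
    obtain ⟨x, _, hx⟩ := Finset.mem_image.mp ha'
    exact ⟨x, hx⟩

/-- for `q = p^(2r)` an even power of a prime `p` (with `r ≥ 1`) and
`s ∈ 𝔽_q^×`, the set `{k ∈ 𝔽_q : s^p·k^(p²) = s·k}` has exactly `p²` elements if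
`s^((q-1)/(p+1)) = 1`, and exactly `1` element otherwise. -/
theorem stmt_11 (p r : ℕ) (hp : p.Prime) (hr : 1 ≤ r) (F : Type*) [Field F] [Fintype F]
    [CharP F p] (hcard : Fintype.card F = p ^ (2 * r)) (s : F) (hs : s ≠ 0) :
    (s ^ ((p ^ (2 * r) - 1) / (p + 1)) = 1 →
      Nat.card {k : F // s ^ p * k ^ (p ^ 2) = s * k} = p ^ 2) ∧
    (s ^ ((p ^ (2 * r) - 1) / (p + 1)) ≠ 1 →
      Nat.card {k : F // s ^ p * k ^ (p ^ 2) = s * k} = 1) := by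
  classical
  have hp2 := hp.two_le
  have hpsq : 1 ≤ p ^ 2 := Nat.one_le_pow _ _ hp.pos
  set d := p ^ 2 - 1 with hd
  have hd0 : d ≠ 0 := by
    have : 4 ≤ p ^ 2 := by nlinarith
    omega
  set m := p ^ (2 * r) - 1 with hm
  have hm' : Fintype.card F - 1 = m := by rw [hcard]
  have hdvd : d ∣ m := by
    have h1 : p ^ 2 - 1 ∣ (p ^ 2) ^ r - 1 ^ r := Nat.sub_dvd_pow_sub_pow (p ^ 2) 1 r
    simpa [← pow_mul, one_pow] using h1
  have hsp : s ^ p ≠ 0 := pow_ne_zero _ hs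
  set c := s * (s ^ p)⁻¹ with hc
  have hc0 : c ≠ 0 := mul_ne_zero hs (inv_ne_zero hsp)
  -- the key pointwise equivalence
  have key : ∀ k : F, (s ^ p * k ^ (p ^ 2) = s * k) ↔ (k = 0 ∨ k ^ d = c) := by
    intro k
    have hps : p ^ 2 = d + 1 := by omega
    by_cases hk : k = 0
    · subst hk
      simp [zero_pow (show p ^ 2 ≠ 0 by omega), Ne.symm hc0]
    · rw [hps, pow_succ, ← mul_assoc]
      constructor
      · intro h
        refine Or.inr ?_
        have h2 : s ^ p * k ^ d = s := mul_right_cancel₀ hk h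
        rw [hc, eq_mul_inv_iff_mul_eq₀ hsp, mul_comm]
        exact h2
      · rintro (rfl | h)
        · simp at hk
        · rw [h, hc]
          field_simp
  -- rewrite the cardinality
  have hcardset : Nat.card {k : F // s ^ p * k ^ (p ^ 2) = s * k}
      = (Finset.univ.filter (fun k : F => k ^ d = c)).card + 1 := by
    rw [Nat.card_congr (Equiv.subtypeEquivRight key), Nat.card_eq_fintype_card,
      Fintype.card_subtype]
    have hsplit : Finset.univ.filter (fun k : F => k = 0 ∨ k ^ d = c)
        = insert (0 : F) (Finset.univ.filter (fun k : F => k ^ d = c)) := by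
      ext k
      simp [Finset.mem_insert]
    rw [hsplit, Finset.card_insert_of_notMem (by
      simp [zero_pow hd0, Ne.symm hc0])]
  -- the criterion transfer
  set t := m / d with ht
  have htd : d * t = m := Nat.mul_div_cancel' hdvd
  have hsq : d = (p + 1) * (p - 1) := by
    rw [hd, show p ^ 2 - 1 = p ^ 2 - 1 ^ 2 by norm_num, Nat.sq_sub_sq]
  have h1 : (p - 1) * t = m / (p + 1) := by
    rw [← htd, hsq, mul_assoc, Nat.mul_div_cancel_left _ (by omega : 0 < p + 1)]
  have h2 : (c ^ t = 1) ↔ s ^ ((p - 1) * t) = 1 := by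
    have hpt : (p - 1) * t + t = p * t := by
      rw [← Nat.succ_mul]
      congr 1
      omega
    have hexp : c ^ t = s ^ t * (s ^ ((p - 1) * t) * s ^ t)⁻¹ := by
      rw [hc, mul_pow, inv_pow, ← pow_mul, ← pow_add, hpt, mul_comm p t, pow_mul]
    rw [hexp, mul_inv_eq_one₀ (mul_ne_zero (pow_ne_zero _ hs) (pow_ne_zero _ hs)), eq_comm, mul_left_eq_self₀]
    simp [pow_ne_zero _ hs]
  have hcrit : (∃ α : F, α ^ d = c) ↔ s ^ (m / (p + 1)) = 1 := by
    rw [exists_pow_iff_aux F hd0 (hm' ▸ hdvd) c hc0, hm', ← ht, h2, h1]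
  constructor
  · intro hyp
    rw [hcardset, count_roots_aux F hd0 (hm' ▸ hdvd) c hc0, if_pos (hcrit.mpr hyp)]
    omega
  · intro hyp
    rw [hcardset, count_roots_aux F hd0 (hm' ▸ hdvd) c hc0, if_neg]
    rw [hcrit]
    exact hyp
end

section
/- Let p be a prime, q a power of p, and s ∈ 𝔽_q^×. Define the pairing β(x,y) = Tr_{𝔽_q/𝔽_p}(s·(x·y^p − x^p·y)). Then the left kernel {x ∈ 𝔽_q : β(x,y) = 0 for all y ∈ 𝔽_q} equals {x ∈ 𝔽_q : s^p·x^{p²} = s·x}. -/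
/-! The trace is invariant under Frobenius, so `Tr(s·x·y^q) = Tr(u·y)` for the `q`-th root
`u` of `s·x`. Hence `β(x, y) = Tr((u − s·x^q)·y)`, and by nondegeneracy of the trace form `x` lies
in the left kernel iff `u = s·x^q`, i.e. iff `s·x = (s·x^q)^q`. -/

open Algebra

section TwistedTracePairing

variable {K L : Type*} [Field K] [Fintype K] [Field L] [Algebra K L] [FiniteDimensional K L]

theorem Algebra.trace_pow_card (z : L) : trace K L (z ^ Fintype.card K) = trace K L z :=
  trace_eq_of_algEquiv (FiniteField.frobeniusAlgEquivOfAlgebraic K L) z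

theorem Algebra.forall_trace_mul_eq_zero_iff (a : L) : (∀ y, trace K L (a * y) = 0) ↔ a = 0 :=
  ⟨(traceForm_nondegenerate K L).1 a, fun ha y => by rw [ha, zero_mul, map_zero]⟩

theorem Algebra.trace_twisted_eq_trace_mul {s x u : L} (hu : u ^ Fintype.card K = s * x) (y : L) :
    trace K L (s * (x * y ^ Fintype.card K - x ^ Fintype.card K * y)) =
      trace K L ((u - s * x ^ Fintype.card K) * y) := by
  have h : s * (x * y ^ Fintype.card K - x ^ Fintype.card K * y) =
      (u * y) ^ Fintype.card K - s * x ^ Fintype.card K * y := by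
    rw [mul_pow, hu]; ring
  rw [h, map_sub, trace_pow_card, ← map_sub, sub_mul, mul_assoc]

theorem Algebra.forall_trace_twisted_eq_zero_iff (s x : L) :
    (∀ y, trace K L (s * (x * y ^ Fintype.card K - x ^ Fintype.card K * y)) = 0) ↔
      (s * x ^ Fintype.card K) ^ Fintype.card K = s * x := by
  let φ := FiniteField.frobeniusAlgEquivOfAlgebraic K L
  have hφ (z : L) : φ z = z ^ Fintype.card K := rfl
  have hu : φ (φ.symm (s * x)) = s * x := φ.apply_symm_apply _
  simp only [trace_twisted_eq_trace_mul hu, forall_trace_mul_eq_zero_iff, sub_eq_zero]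
  rw [← φ.injective.eq_iff, hu, hφ, eq_comm]

end TwistedTracePairing

theorem stmt_13_general (p : ℕ) (hp : p.Prime) (F : Type*) [Field F] [Fintype F]
    [Algebra (ZMod p) F] (s : F) :
    ∀ x : F,
      (∀ y : F, Algebra.trace (ZMod p) F (s * (x * y ^ p - x ^ p * y)) = 0) ↔
        s ^ p * x ^ (p ^ 2) = s * x := by
  have : Fact p.Prime := ⟨hp⟩
  intro x
  have h := forall_trace_twisted_eq_zero_iff (K := ZMod p) s x
  rwa [ZMod.card, mul_pow, ← pow_mul, ← sq] at h

/-- for `s ∈ 𝔽_q^×`, the left kernel of the pairing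
`β(x,y) = Tr_{𝔽_q/𝔽_p}(s·(x·y^p − x^p·y))` equals `{x : s^p·x^(p²) = s·x}`. -/
theorem stmt_13 (p : ℕ) (hp : p.Prime) (F : Type*) [Field F] [Fintype F] [CharP F p]
    [Algebra (ZMod p) F] (s : F) (hs : s ≠ 0) :
    ∀ x : F,
      (∀ y : F, Algebra.trace (ZMod p) F (s * (x * y ^ p - x ^ p * y)) = 0) ↔
        s ^ p * x ^ (p ^ 2) = s * x :=
  stmt_13_general p hp F s
end
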